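/- Let E be a Banach space and let (T₁(t))_{t≥0} and (T₂(t))_{t≥0} be strongly continuous semigroups on E. Assume there exist M' ≥ 1 and ω' ≥ 0 such that ‖T₁(t)‖ ≤ M'·e^{ω't}, ‖T₂(t)‖ ≤ M'·e^{ω't}, and ‖(1/2^n)·(T₁(t/n)T₂(t/n) + T₂(t/n)T₁(t/n))^n‖ ≤ M'·e^{ω't} for all t ≥ 0 and all integers n ≥ 1. Set F := C₀([0,∞); E), let Q_i(t)f := ∫₀ᵗ T_i(t−s) f(s) ds for f ∈ F, and define on ℰ := E × F × F the bounded operators 𝒯₁(t)(x,f,g) := (T₁(t)x + Q₁(t)f, L(t)f, g) and 𝒯₂(t)(x,f,g) := (T₂(t)x + Q₂(t)g, f, L(t)g). Then there exist M ≥ 1 and ω ∈ ℝ such that ‖(1/2^n)·(𝒯₁(t/n)𝒯₂(t/n) + 𝒯₂(t/n)𝒯₁(t/n))^n‖ ≤ M·e^{ωt} for all t ≥ 0 and all integers n ≥ 1. -/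

import Mathlib

open ContinuousLinearMap MeasureTheory
open scoped ZeroAtInfty

set_option maxHeartbeats 4000000
set_option synthInstance.maxHeartbeats 1000000

/-- Extension by zero of a `C₀` function on `[0,∞)` to all of `ℝ`. -/
noncomputable def extIci {E : Type*} [NormedAddCommGroup E]
    (f : C₀(Set.Ici (0 : ℝ), E)) (s : ℝ) : E :=
  if h : 0 ≤ s then f ⟨s, h⟩ else 0

/-- The operator `(x,f,g) ↦ (T x + Q f, L f, g)` on `E × F × F`. -/
noncomputable def tripleMatFirst {E F : Type*} [NormedAddCommGroup E] [NormedSpace ℝ E]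
    [NormedAddCommGroup F] [NormedSpace ℝ F]
    (T : E →L[ℝ] E) (Q : F →L[ℝ] E) (L : F →L[ℝ] F) : (E × F × F) →L[ℝ] (E × F × F) :=
  (T.comp (fst ℝ E (F × F)) + Q.comp ((fst ℝ F F).comp (snd ℝ E (F × F)))).prod
    (((L.comp ((fst ℝ F F).comp (snd ℝ E (F × F)))).prod
      ((snd ℝ F F).comp (snd ℝ E (F × F)))))

/-- The operator `(x,f,g) ↦ (T x + Q g, f, L g)` on `E × F × F`. -/
noncomputable def tripleMatSecond {E F : Type*} [NormedAddCommGroup E] [NormedSpace ℝ E]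
    [NormedAddCommGroup F] [NormedSpace ℝ F]
    (T : E →L[ℝ] E) (Q : F →L[ℝ] E) (L : F →L[ℝ] F) : (E × F × F) →L[ℝ] (E × F × F) :=
  (T.comp (fst ℝ E (F × F)) + Q.comp ((snd ℝ F F).comp (snd ℝ E (F × F)))).prod
    ((((fst ℝ F F).comp (snd ℝ E (F × F)))).prod
      (L.comp ((snd ℝ F F).comp (snd ℝ E (F × F)))))

section Block

variable {E W : Type*} [NormedAddCommGroup E] [NormedSpace ℝ E]
  [NormedAddCommGroup W] [NormedSpace ℝ W]

/-- Block operator `(x, w) ↦ (A x + R w, P w)` on `E × W`. -/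
noncomputable def blockOp (A : E →L[ℝ] E) (R : W →L[ℝ] E) (P : W →L[ℝ] W) :
    (E × W) →L[ℝ] (E × W) :=
  (A.comp (fst ℝ E W) + R.comp (snd ℝ E W)).prod (P.comp (snd ℝ E W))

lemma blockOp_apply (A : E →L[ℝ] E) (R : W →L[ℝ] E) (P : W →L[ℝ] W) (z : E × W) :
    blockOp A R P z = (A z.1 + R z.2, P z.2) := rfl

lemma blockOp_one : blockOp (1 : E →L[ℝ] E) (0 : W →L[ℝ] E) (1 : W →L[ℝ] W) = 1 := by
  refine ContinuousLinearMap.ext fun z => ?_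
  simp [blockOp_apply]

lemma blockOp_mul (A A' : E →L[ℝ] E) (R R' : W →L[ℝ] E) (P P' : W →L[ℝ] W) :
    blockOp A R P * blockOp A' R' P' =
      blockOp (A * A') (A.comp R' + R.comp P') (P * P') := by
  refine ContinuousLinearMap.ext fun z => ?_
  simp [blockOp_apply, mul_apply, Prod.ext_iff, map_add, add_assoc]

lemma blockOp_norm_le (A : E →L[ℝ] E) (R : W →L[ℝ] E) (P : W →L[ℝ] W) {c : ℝ}
    (hc : 0 ≤ c) (hA : ‖A‖ + ‖R‖ ≤ c) (hP : ‖P‖ ≤ c) : ‖blockOp A R P‖ ≤ c := by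
  refine opNorm_le_bound _ hc fun z => ?_
  have h1 : ‖A z.1 + R z.2‖ ≤ c * ‖z‖ := by
    calc ‖A z.1 + R z.2‖ ≤ ‖A‖ * ‖z.1‖ + ‖R‖ * ‖z.2‖ :=
        (norm_add_le _ _).trans (add_le_add (A.le_opNorm _) (R.le_opNorm _))
      _ ≤ ‖A‖ * ‖z‖ + ‖R‖ * ‖z‖ := by
        gcongr
        · exact norm_fst_le z
        · exact norm_snd_le z
      _ = (‖A‖ + ‖R‖) * ‖z‖ := by ring
      _ ≤ c * ‖z‖ := by gcongr
  have h2 : ‖P z.2‖ ≤ c * ‖z‖ := by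
    calc ‖P z.2‖ ≤ ‖P‖ * ‖z.2‖ := P.le_opNorm _
      _ ≤ c * ‖z‖ := by
        gcongr
        exact norm_snd_le z
  rw [blockOp_apply, Prod.norm_def]
  exact max_le h1 h2

end Block

lemma zai_norm_apply_le {α E : Type*} [TopologicalSpace α] [SeminormedAddCommGroup E]
    (f : C₀(α, E)) (x : α) : ‖f x‖ ≤ ‖f‖ := by
  rw [← ZeroAtInftyContinuousMap.norm_toBCF_eq_norm]
  exact f.toBCF.norm_coe_le_norm x

lemma zai_norm_le {α E : Type*} [TopologicalSpace α] [SeminormedAddCommGroup E]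
    (f : C₀(α, E)) {C : ℝ} (hC : 0 ≤ C) (h : ∀ x, ‖f x‖ ≤ C) : ‖f‖ ≤ C := by
  rw [← ZeroAtInftyContinuousMap.norm_toBCF_eq_norm]
  exact (BoundedContinuousFunction.norm_le hC).mpr h


lemma Rop_norm_le {E F : Type*} [NormedAddCommGroup E] [NormedSpace ℝ E]
    [NormedAddCommGroup F] [NormedSpace ℝ F]
    (T₁ T₂ : E →L[ℝ] E) (Q₁ Q₂ : F →L[ℝ] E) {K q : ℝ}
    (hT₁ : ‖T₁‖ ≤ K) (hT₂ : ‖T₂‖ ≤ K) (hQ₁ : ‖Q₁‖ ≤ q) (hQ₂ : ‖Q₂‖ ≤ q)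
    (hK : 0 ≤ K) (hq : 0 ≤ q) :
    ‖(1 / 2 : ℝ) • ((Q₁ + T₂.comp Q₁).comp (fst ℝ F F) +
      (T₁.comp Q₂ + Q₂).comp (snd ℝ F F))‖ ≤ q * (1 + K) := by
  have c1 : ‖(Q₁ + T₂.comp Q₁).comp (fst ℝ F F)‖ ≤ q + K * q := by
    refine (opNorm_comp_le _ _).trans ?_
    have hfst := norm_fst_le (𝕜 := ℝ) (E := F) (F := F)
    have h := norm_add_le Q₁ (T₂.comp Q₁)
    have h2 := opNorm_comp_le T₂ Q₁
    have h3 := mul_le_mul hT₂ hQ₁ (norm_nonneg Q₁) hK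
    nlinarith [norm_nonneg (Q₁ + T₂.comp Q₁), norm_nonneg Q₁,
      norm_nonneg (T₂.comp Q₁), norm_nonneg T₂]
  have c2 : ‖(T₁.comp Q₂ + Q₂).comp (snd ℝ F F)‖ ≤ K * q + q := by
    refine (opNorm_comp_le _ _).trans ?_
    have hsnd := norm_snd_le (𝕜 := ℝ) (E := F) (F := F)
    have h := norm_add_le (T₁.comp Q₂) Q₂
    have h2 := opNorm_comp_le T₁ Q₂
    have h3 := mul_le_mul hT₁ hQ₂ (norm_nonneg Q₂) hK
    nlinarith [norm_nonneg (T₁.comp Q₂ + Q₂), norm_nonneg Q₂,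
      norm_nonneg (T₁.comp Q₂), norm_nonneg T₁]
  have hadd := norm_add_le ((Q₁ + T₂.comp Q₁).comp (fst ℝ F F))
    ((T₁.comp Q₂ + Q₂).comp (snd ℝ F F))
  have hsm := norm_smul_le (1/2 : ℝ) ((Q₁ + T₂.comp Q₁).comp (fst ℝ F F) +
    (T₁.comp Q₂ + Q₂).comp (snd ℝ F F))
  have habs : ‖(1/2 : ℝ)‖ = 1/2 := by
    rw [Real.norm_eq_abs, abs_of_pos]; norm_num
  rw [habs] at hsm
  nlinarith

lemma blockOp_pow_norm_le {E W : Type*} [NormedAddCommGroup E] [NormedSpace ℝ E]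
    [NormedAddCommGroup W] [NormedSpace ℝ W]
    (A : E →L[ℝ] E) (R : W →L[ℝ] E) (P : W →L[ℝ] W)
    (n : ℕ) {C β : ℝ} (hC : 1 ≤ C) (hβ : 0 ≤ β)
    (hA : ∀ m : ℕ, m ≤ n → ‖A ^ m‖ ≤ C) (hR : ‖R‖ ≤ β) (hP : ‖P‖ ≤ 1) :
    ‖(blockOp A R P) ^ n‖ ≤ C + n * (β * C) := by
  have hC0 : (0:ℝ) < C := lt_of_lt_of_le one_pos hC
  have hnβC : (0:ℝ) ≤ (n : ℝ) * (β * C) :=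
    mul_nonneg (Nat.cast_nonneg n) (mul_nonneg hβ hC0.le)
  have key : ∀ m : ℕ, m ≤ n → ∃ Rm : W →L[ℝ] E,
      (blockOp A R P) ^ m = blockOp (A ^ m) Rm (P ^ m) ∧ ‖Rm‖ ≤ m * (β * C) := by
    intro m
    induction m with
    | zero =>
      intro _
      refine ⟨0, ?_, by simp⟩
      rw [pow_zero, pow_zero, pow_zero, blockOp_one]
    | succ m ih =>
      intro hm
      obtain ⟨Rm, hEq, hRm⟩ := ih (by omega)
      refine ⟨(A ^ m).comp R + Rm.comp P, ?_, ?_⟩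
      · rw [pow_succ, hEq, blockOp_mul, ← pow_succ, ← pow_succ]
      · have h1 : ‖(A ^ m).comp R‖ ≤ C * β :=
          (opNorm_comp_le _ _).trans
            (mul_le_mul (hA m (by omega)) hR (norm_nonneg _) hC0.le)
        have h2 : ‖Rm.comp P‖ ≤ (m : ℝ) * (β * C) := by
          refine (opNorm_comp_le _ _).trans ?_
          calc ‖Rm‖ * ‖P‖ ≤ ((m : ℝ) * (β * C)) * 1 :=
              mul_le_mul hRm hP (norm_nonneg _)
                (mul_nonneg (Nat.cast_nonneg m) (mul_nonneg hβ hC0.le))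
            _ = (m : ℝ) * (β * C) := mul_one _
        calc ‖(A ^ m).comp R + Rm.comp P‖ ≤ ‖(A ^ m).comp R‖ + ‖Rm.comp P‖ :=
            norm_add_le _ _
          _ ≤ C * β + (m : ℝ) * (β * C) := add_le_add h1 h2
          _ = ((m : ℕ) + 1 : ℝ) * (β * C) := by ring
          _ = ((m + 1 : ℕ) : ℝ) * (β * C) := by push_cast; ring
  obtain ⟨Rn, hEq, hRn⟩ := key n le_rfl
  rw [hEq]
  have hPpow : ‖P ^ n‖ ≤ 1 := by
    rcases Nat.eq_zero_or_pos n with rfl | hn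
    · rw [pow_zero, ContinuousLinearMap.one_def]
      exact norm_id_le
    · calc ‖P ^ n‖ ≤ ‖P‖ ^ n := norm_pow_le' P hn
        _ ≤ 1 ^ n := pow_le_pow_left₀ (norm_nonneg _) hP n
        _ = 1 := one_pow n
  refine blockOp_norm_le _ _ _ (by linarith) (add_le_add (hA n le_rfl) hRn)
    (hPpow.trans (by linarith))

lemma triple_half_eq_blockOp {E F : Type*} [NormedAddCommGroup E] [NormedSpace ℝ E]
    [NormedAddCommGroup F] [NormedSpace ℝ F]
    (T₁ T₂ : E →L[ℝ] E) (Q₁ Q₂ : F →L[ℝ] E) (L : F →L[ℝ] F) :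
    (1 / 2 : ℝ) • (tripleMatFirst T₁ Q₁ L * tripleMatSecond T₂ Q₂ L +
        tripleMatSecond T₂ Q₂ L * tripleMatFirst T₁ Q₁ L) =
      blockOp ((1 / 2 : ℝ) • (T₁ * T₂ + T₂ * T₁))
        ((1 / 2 : ℝ) • ((Q₁ + T₂.comp Q₁).comp (fst ℝ F F) +
          (T₁.comp Q₂ + Q₂).comp (snd ℝ F F)))
        (L.prodMap L) := by
  refine ContinuousLinearMap.ext fun z => ?_
  obtain ⟨x, f, g⟩ := z
  simp only [tripleMatFirst, tripleMatSecond, blockOp_apply, ContinuousLinearMap.mul_apply, ContinuousLinearMap.smul_apply, ContinuousLinearMap.add_apply,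
    comp_apply, prod_apply, coe_fst', coe_snd', coe_prodMap', Prod.map_apply, map_add, Prod.smul_mk,
    Prod.mk_add_mk, Prod.ext_iff]
  refine ⟨?_, ?_, ?_⟩
  · module
  · module
  · module

lemma triple_half_pow_eq {E F : Type*} [NormedAddCommGroup E] [NormedSpace ℝ E]
    [NormedAddCommGroup F] [NormedSpace ℝ F]
    (T₁ T₂ : E →L[ℝ] E) (Q₁ Q₂ : F →L[ℝ] E) (L : F →L[ℝ] F) (n : ℕ) :
    (1 / 2 ^ n : ℝ) • (tripleMatFirst T₁ Q₁ L * tripleMatSecond T₂ Q₂ L +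
        tripleMatSecond T₂ Q₂ L * tripleMatFirst T₁ Q₁ L) ^ n =
      (blockOp ((1 / 2 : ℝ) • (T₁ * T₂ + T₂ * T₁))
        ((1 / 2 : ℝ) • ((Q₁ + T₂.comp Q₁).comp (fst ℝ F F) +
          (T₁.comp Q₂ + Q₂).comp (snd ℝ F F)))
        (L.prodMap L)) ^ n := by
  rw [← triple_half_eq_blockOp, smul_pow, div_pow, one_pow]

/-- stability of the symmetrically weighted products for the splitting of
the inhomogeneous Cauchy problem on `E × C₀([0,∞);E) × C₀([0,∞);E)`. -/
theorem stability_weighted_inhomogeneous_C0 {E : Type*}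
    [NormedAddCommGroup E] [NormedSpace ℝ E] [CompleteSpace E]
    (T₁ T₂ : ℝ → E →L[ℝ] E)
    (hT₁0 : T₁ 0 = 1) (hT₂0 : T₂ 0 = 1)
    (hT₁add : ∀ s t : ℝ, 0 ≤ s → 0 ≤ t → T₁ (t + s) = T₁ t * T₁ s)
    (hT₂add : ∀ s t : ℝ, 0 ≤ s → 0 ≤ t → T₂ (t + s) = T₂ t * T₂ s)
    (hT₁cont : ∀ x : E, ContinuousOn (fun t => T₁ t x) (Set.Ici (0 : ℝ)))
    (hT₂cont : ∀ x : E, ContinuousOn (fun t => T₂ t x) (Set.Ici (0 : ℝ)))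
    (M' ω' : ℝ) (hM' : 1 ≤ M') (hω' : 0 ≤ ω')
    (hb₁ : ∀ t : ℝ, 0 ≤ t → ‖T₁ t‖ ≤ M' * Real.exp (ω' * t))
    (hb₂ : ∀ t : ℝ, 0 ≤ t → ‖T₂ t‖ ≤ M' * Real.exp (ω' * t))
    (hstab : ∀ t : ℝ, 0 ≤ t → ∀ n : ℕ, 1 ≤ n →
      ‖(1 / 2 ^ n : ℝ) •
        (T₁ (t / n) * T₂ (t / n) + T₂ (t / n) * T₁ (t / n)) ^ n‖ ≤ M' * Real.exp (ω' * t))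
    (L : ℝ → C₀(Set.Ici (0 : ℝ), E) →L[ℝ] C₀(Set.Ici (0 : ℝ), E))
    (hL : ∀ t : ℝ, 0 ≤ t → ∀ f : C₀(Set.Ici (0 : ℝ), E),
      ∀ (s : ℝ) (hs : 0 ≤ s) (hst : 0 ≤ s + t), (L t f) ⟨s, hs⟩ = f ⟨s + t, hst⟩)
    (Q₁ Q₂ : ℝ → C₀(Set.Ici (0 : ℝ), E) →L[ℝ] E)
    (hQ₁ : ∀ t : ℝ, 0 ≤ t → ∀ f : C₀(Set.Ici (0 : ℝ), E),
      Q₁ t f = ∫ s in (0 : ℝ)..t, T₁ (t - s) (extIci f s))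
    (hQ₂ : ∀ t : ℝ, 0 ≤ t → ∀ f : C₀(Set.Ici (0 : ℝ), E),
      Q₂ t f = ∫ s in (0 : ℝ)..t, T₂ (t - s) (extIci f s)) :
    ∃ M ω : ℝ, 1 ≤ M ∧ ∀ t : ℝ, 0 ≤ t → ∀ n : ℕ, 1 ≤ n →
      ‖(1 / 2 ^ n : ℝ) •
        (tripleMatFirst (T₁ (t / n)) (Q₁ (t / n)) (L (t / n)) *
            tripleMatSecond (T₂ (t / n)) (Q₂ (t / n)) (L (t / n)) +
          tripleMatSecond (T₂ (t / n)) (Q₂ (t / n)) (L (t / n)) *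
            tripleMatFirst (T₁ (t / n)) (Q₁ (t / n)) (L (t / n))) ^ n‖ ≤
        M * Real.exp (ω * t) := by
  classical
  refine ⟨2 * M' ^ 3, 3 * ω' + 1, by nlinarith [sq_nonneg M', sq_nonneg (M' - 1)], ?_⟩
  intro t ht n hn
  have hn0 : (n : ℝ) ≠ 0 := Nat.cast_ne_zero.mpr (by omega)
  set τ : ℝ := t / n with hτdef
  have hτ : 0 ≤ τ := div_nonneg ht (Nat.cast_nonneg n)
  have hnτ : (n : ℝ) * τ = t := by
    rw [hτdef, mul_comm, div_mul_cancel₀ _ hn0]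
  have hτt : τ ≤ t := div_le_self ht (by exact_mod_cast hn)
  set C : ℝ := M' * Real.exp (ω' * t) with hC
  have hexp1 : 1 ≤ Real.exp (ω' * t) := Real.one_le_exp (by positivity)
  have hC1 : 1 ≤ C := by nlinarith
  have hC0 : 0 < C := lt_of_lt_of_le one_pos hC1
  set K : ℝ := M' * Real.exp (ω' * τ) with hK
  have hK1 : 1 ≤ K := by nlinarith [Real.one_le_exp (by positivity : (0:ℝ) ≤ ω' * τ)]
  have hK0 : 0 ≤ K := le_trans zero_le_one hK1
  have hKC : K ≤ C := by
    have h := Real.exp_le_exp.mpr (by nlinarith : ω' * τ ≤ ω' * t)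
    nlinarith
  -- the block operators
  set A : E →L[ℝ] E := (1 / 2 : ℝ) • (T₁ τ * T₂ τ + T₂ τ * T₁ τ) with hA
  set Rop := (1 / 2 : ℝ) • ((Q₁ τ + (T₂ τ).comp (Q₁ τ)).comp
        (fst ℝ C₀(Set.Ici (0 : ℝ), E) C₀(Set.Ici (0 : ℝ), E)) +
      ((T₁ τ).comp (Q₂ τ) + Q₂ τ).comp
        (snd ℝ C₀(Set.Ici (0 : ℝ), E) C₀(Set.Ici (0 : ℝ), E))) with hRop
  set P := (L τ).prodMap (L τ) with hP
  -- norm bounds for the ingredients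
  have hQbound : ∀ (T : ℝ → E →L[ℝ] E) (Q : ℝ → C₀(Set.Ici (0:ℝ), E) →L[ℝ] E),
      (∀ u : ℝ, 0 ≤ u → ‖T u‖ ≤ M' * Real.exp (ω' * u)) →
      (∀ f, Q τ f = ∫ s in (0:ℝ)..τ, T (τ - s) (extIci f s)) → ‖Q τ‖ ≤ τ * K := by
    intro T Q hb hQ
    refine opNorm_le_bound _ (by positivity) fun f => ?_
    rw [hQ f]
    have hint : ‖∫ s in (0:ℝ)..τ, T (τ - s) (extIci f s)‖ ≤ (K * ‖f‖) * |τ - 0| := by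
      refine intervalIntegral.norm_integral_le_of_norm_le_const fun s hs => ?_
      rw [Set.uIoc_of_le hτ] at hs
      have h1 : 0 ≤ τ - s := by linarith [hs.2]
      have h2 : ‖extIci f s‖ ≤ ‖f‖ := by
        unfold extIci
        split
        · exact zai_norm_apply_le f _
        · simpa using norm_nonneg f
      have hTb : ‖T (τ - s)‖ ≤ K := by
        have := hb _ h1
        have hmono := Real.exp_le_exp.mpr (by nlinarith [hs.1] : ω' * (τ - s) ≤ ω' * τ)
        nlinarith
      calc ‖T (τ - s) (extIci f s)‖ ≤ ‖T (τ - s)‖ * ‖extIci f s‖ := (T (τ - s)).le_opNorm _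
        _ ≤ K * ‖f‖ := mul_le_mul hTb h2 (norm_nonneg _) hK0
    rw [sub_zero, abs_of_nonneg hτ] at hint
    calc ‖∫ s in (0:ℝ)..τ, T (τ - s) (extIci f s)‖ ≤ (K * ‖f‖) * τ := hint
      _ = τ * K * ‖f‖ := by ring
  have hQ₁n : ‖Q₁ τ‖ ≤ τ * K := hQbound T₁ Q₁ hb₁ (fun f => hQ₁ τ hτ f)
  have hQ₂n : ‖Q₂ τ‖ ≤ τ * K := hQbound T₂ Q₂ hb₂ (fun f => hQ₂ τ hτ f)
  have hT₁n : ‖T₁ τ‖ ≤ K := hb₁ τ hτ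
  have hT₂n : ‖T₂ τ‖ ≤ K := hb₂ τ hτ
  have hLn : ‖L τ‖ ≤ 1 := by
    refine opNorm_le_bound _ zero_le_one fun f => ?_
    rw [one_mul]
    refine zai_norm_le _ (norm_nonneg f) fun x => ?_
    obtain ⟨s, hs⟩ := x
    have hs' : (0:ℝ) ≤ s := hs
    rw [hL τ hτ f s hs (by linarith)]
    exact zai_norm_apply_le f _
  have hPn : ‖P‖ ≤ 1 := by
    refine opNorm_le_bound _ zero_le_one fun w => ?_
    rw [one_mul, hP]
    rw [show ((L τ).prodMap (L τ)) w = (L τ w.1, L τ w.2) from rfl, Prod.norm_def]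
    refine max_le ?_ ?_
    · calc ‖L τ w.1‖ ≤ ‖L τ‖ * ‖w.1‖ := (L τ).le_opNorm _
        _ ≤ 1 * ‖w‖ := mul_le_mul hLn (norm_fst_le w) (norm_nonneg _) zero_le_one
        _ = ‖w‖ := one_mul _
    · calc ‖L τ w.2‖ ≤ ‖L τ‖ * ‖w.2‖ := (L τ).le_opNorm _
        _ ≤ 1 * ‖w‖ := mul_le_mul hLn (norm_snd_le w) (norm_nonneg _) zero_le_one
        _ = ‖w‖ := one_mul _
  have hβ0 : (0:ℝ) ≤ τ * K * (1 + K) :=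
    mul_nonneg (mul_nonneg hτ hK0) (by linarith)
  have hRn : ‖Rop‖ ≤ (τ * K) * (1 + K) := by
    rw [hRop]
    exact Rop_norm_le (T₁ τ) (T₂ τ) (Q₁ τ) (Q₂ τ) hT₁n hT₂n hQ₁n hQ₂n hK0
      (mul_nonneg hτ hK0)
  -- power bound for A
  have hApow : ∀ m : ℕ, m ≤ n → ‖A ^ m‖ ≤ C := by
    intro m hm
    rcases Nat.eq_zero_or_pos m with rfl | hm1
    · rw [pow_zero]
      calc ‖(1 : E →L[ℝ] E)‖ ≤ 1 := by
            rw [ContinuousLinearMap.one_def]; exact norm_id_le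
        _ ≤ C := hC1
    · have hmτ : 0 ≤ (m : ℝ) * τ := mul_nonneg (Nat.cast_nonneg m) hτ
      have h := hstab ((m : ℝ) * τ) hmτ m hm1
      have hm0 : (m : ℝ) ≠ 0 := Nat.cast_ne_zero.mpr (by omega)
      rw [mul_div_cancel_left₀ _ hm0] at h
      have hAe : A ^ m = (1 / 2 ^ m : ℝ) • (T₁ τ * T₂ τ + T₂ τ * T₁ τ) ^ m := by
        rw [hA, smul_pow, div_pow, one_pow]
      rw [hAe]
      refine h.trans ?_
      rw [hC]
      have hle : (m : ℝ) * τ ≤ t := by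
        rw [← hnτ]
        have hmn : (m : ℝ) ≤ (n : ℝ) := by exact_mod_cast hm
        exact mul_le_mul_of_nonneg_right hmn hτ
      exact mul_le_mul_of_nonneg_left
        (Real.exp_le_exp.mpr (mul_le_mul_of_nonneg_left hle hω')) (by linarith)
  have hfinal : ‖(blockOp A Rop P) ^ n‖ ≤ C + (n : ℝ) * ((τ * K * (1 + K)) * C) :=
    blockOp_pow_norm_le A Rop P n hC1 hβ0 hApow hRn hPn
  -- identify the goal with powers of the block operator
  have hrw : (1 / 2 ^ n : ℝ) • (tripleMatFirst (T₁ τ) (Q₁ τ) (L τ) *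
        tripleMatSecond (T₂ τ) (Q₂ τ) (L τ) +
      tripleMatSecond (T₂ τ) (Q₂ τ) (L τ) *
        tripleMatFirst (T₁ τ) (Q₁ τ) (L τ)) ^ n = (blockOp A Rop P) ^ n := by
    rw [hA, hRop, hP]
    exact triple_half_pow_eq (T₁ τ) (T₂ τ) (Q₁ τ) (Q₂ τ) (L τ) n
  rw [hrw]
  refine hfinal.trans ?_
  -- final arithmetic
  have h1 : (n : ℝ) * ((τ * K * (1 + K)) * C) = t * (K * (1 + K)) * C := by
    rw [← hnτ]; ring
  have h2 : K * (1 + K) ≤ 2 * C ^ 2 := by nlinarith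
  have hexp : (1 : ℝ) + 2 * t ≤ 2 * Real.exp t := by
    nlinarith [Real.add_one_le_exp t]
  have hCexp : C ^ 3 = M' ^ 3 * Real.exp (3 * (ω' * t)) := by
    rw [hC, mul_pow, ← Real.exp_nat_mul]
    norm_num
  calc C + (n : ℝ) * ((τ * K * (1 + K)) * C) = C + t * (K * (1 + K)) * C := by rw [h1]
    _ ≤ C + t * (2 * C ^ 2) * C := by
        have h3 := mul_le_mul_of_nonneg_right (mul_le_mul_of_nonneg_left h2 ht) hC0.le
        linarith
    _ ≤ (1 + 2 * t) * C ^ 3 := by nlinarith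
    _ ≤ (2 * Real.exp t) * C ^ 3 := by nlinarith [pow_pos hC0 3]
    _ = 2 * M' ^ 3 * Real.exp ((3 * ω' + 1) * t) := by
        rw [hCexp, show (2:ℝ) * Real.exp t * (M' ^ 3 * Real.exp (3 * (ω' * t))) =
          2 * M' ^ 3 * (Real.exp (3 * (ω' * t)) * Real.exp t) from by ring, ← Real.exp_add]
        congr 2
        ring
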